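/- arXiv:2101.03777 — 7 statements merged into one kernel-verified Lean document; each statement's English description precedes it below -/
import Mathlib

section
/- Let d ≥ 1, let I be a finite index set of cardinality d+1, let a : I → ℝ^d satisfy Σ_{σ∈I} a_σ = 0, and let U : I → ℝ^d satisfy Σ_{σ∈I} U_σ · a_σ = 0. Define, for σ, σ' ∈ I, F_{σ,σ'} = (U_σ + U_{σ'} − (1/(d+1)) Σ_{σ''∈I} U_{σ''}) · ((a_{σ'} − a_σ)/(d+1)). Then for every σ ∈ I one has Σ_{σ'∈I} F_{σ,σ'} = − U_σ · a_σ. -/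
open Matrix Finset

/-- on a simplex with face area vectors `a` summing to zero and
velocities `U` discretely divergence-free, the co-volume fluxes
`F σ σ' = (U σ + U σ' - (1/(d+1)) ∑ U) · ((a σ' - a σ)/(d+1))` satisfy
`∑ σ' F σ σ' = - U σ · a σ`. -/
theorem stmt_0 (d : ℕ) (hd : 1 ≤ d) (I : Type*) [Fintype I]
    (hcard : Fintype.card I = d + 1)
    (a U : I → (Fin d → ℝ))
    (ha : ∑ σ : I, a σ = 0)
    (hU : ∑ σ : I, U σ ⬝ᵥ a σ = 0) :
    ∀ σ : I, ∑ σ' : I,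
      (U σ + U σ' - ((d : ℝ) + 1)⁻¹ • ∑ σ'' : I, U σ'') ⬝ᵥ
        (((d : ℝ) + 1)⁻¹ • (a σ' - a σ)) = - (U σ ⬝ᵥ a σ) := by
  intro σ
  have hn : (d : ℝ) + 1 ≠ 0 := by positivity
  have hcardR : ((Fintype.card I : ℝ)) = (d : ℝ) + 1 := by
    rw [hcard]; push_cast; ring
  set c : ℝ := ((d : ℝ) + 1)⁻¹ with hc
  set S : Fin d → ℝ := ∑ σ'' : I, U σ''
  have key : ∀ σ' : I,
      (U σ + U σ' - c • S) ⬝ᵥ (c • (a σ' - a σ))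
        = c * ((U σ ⬝ᵥ a σ' - U σ ⬝ᵥ a σ) + (U σ' ⬝ᵥ a σ' - U σ' ⬝ᵥ a σ)
            - c * (S ⬝ᵥ a σ' - S ⬝ᵥ a σ)) := by
    intro σ'
    simp only [dotProduct_smul, sub_dotProduct, add_dotProduct, smul_dotProduct,
      dotProduct_sub, smul_eq_mul]
    ring
  have dsum : ∀ v : Fin d → ℝ, ∀ f : I → Fin d → ℝ,
      ∑ τ : I, v ⬝ᵥ f τ = v ⬝ᵥ ∑ τ : I, f τ := by
    intro v f
    simp only [dotProduct, Finset.sum_apply, Finset.mul_sum]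
    rw [Finset.sum_comm]
  have dsum' : ∀ v : Fin d → ℝ, ∀ f : I → Fin d → ℝ,
      ∑ τ : I, f τ ⬝ᵥ v = (∑ τ : I, f τ) ⬝ᵥ v := by
    intro v f
    simp only [dotProduct, Finset.sum_apply, Finset.sum_mul]
    rw [Finset.sum_comm]
  rw [Finset.sum_congr rfl fun σ' _ => key σ']
  rw [← Finset.mul_sum]
  have h1 : ∑ σ' : I, U σ ⬝ᵥ a σ' = 0 := by
    rw [dsum, ha, dotProduct_zero]
  have h2 : ∑ σ' : I, S ⬝ᵥ a σ' = 0 := by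
    rw [dsum, ha, dotProduct_zero]
  have h3 : ∑ σ' : I, U σ' ⬝ᵥ a σ' = 0 := hU
  have h4 : ∑ σ' : I, U σ' ⬝ᵥ a σ = S ⬝ᵥ a σ := by
    rw [dsum']
  have hconst : ∀ x : ℝ, ∑ _σ' : I, x = ((d : ℝ) + 1) * x := by
    intro x
    rw [Finset.sum_const, nsmul_eq_mul, Finset.card_univ, ← hcardR]
  have expand : ∑ σ' : I,
      ((U σ ⬝ᵥ a σ' - U σ ⬝ᵥ a σ) + (U σ' ⬝ᵥ a σ' - U σ' ⬝ᵥ a σ)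
        - c * (S ⬝ᵥ a σ' - S ⬝ᵥ a σ))
      = -(((d : ℝ) + 1) * (U σ ⬝ᵥ a σ)) := by
    simp only [Finset.sum_sub_distrib, Finset.sum_add_distrib, ← Finset.mul_sum,
      h1, h2, h3, h4, hconst]
    have h5 : ((1:ℝ) + (d:ℝ))⁻¹ * ((1:ℝ) + (d:ℝ)) = 1 := inv_mul_cancel₀ (by positivity)
    field_simp
    linear_combination (S ⬝ᵥ a σ) * h5
  rw [expand, hc]
  field_simp
end

section
/- Let d ≥ 1, let I be a finite index set of cardinality d+1, let a : I → ℝ^d satisfy Σ_{σ∈I} a_σ = 0, and let U : I → ℝ^d satisfy Σ_{σ∈I} U_σ · a_σ = 0. Define F_{σ,σ'} = (U_σ + U_{σ'} − (1/(d+1)) Σ_{σ''∈I} U_{σ''}) · ((a_{σ'} − a_σ)/(d+1)). Then Σ_{σ∈I} Σ_{σ'∈I} F_{σ,σ'} (U_{σ'} − U_σ) · ((U_σ + U_{σ'})/2) = Σ_{σ∈I} ‖U_σ‖² (U_σ · a_σ). -/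
open Matrix Finset
open scoped RealInnerProductSpace

private lemma aux_sum {I : Type*} [Fintype I] (F : I → I → ℝ) (g : I → ℝ)
    (hanti : ∀ x y, F x y = - F y x) :
    ∑ x : I, ∑ y : I, F x y * ((2:ℝ)⁻¹ * (g y - g x)) =
      ∑ y : I, g y * ∑ x : I, F x y := by
  have h1 : ∑ x : I, ∑ y : I, F x y * g x = - ∑ x : I, ∑ y : I, F x y * g y := by
    calc ∑ x : I, ∑ y : I, F x y * g x
        = ∑ y : I, ∑ x : I, F x y * g x := Finset.sum_comm
      _ = ∑ y : I, ∑ x : I, -(F y x * g x) := by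
          refine Finset.sum_congr rfl fun y _ => Finset.sum_congr rfl fun x _ => ?_
          rw [hanti x y]; ring
      _ = - ∑ y : I, ∑ x : I, F y x * g x := by simp
  have h3 : ∑ x : I, ∑ y : I, F x y * g y = ∑ y : I, g y * ∑ x : I, F x y := by
    rw [Finset.sum_comm]
    refine Finset.sum_congr rfl fun y _ => ?_
    rw [Finset.mul_sum]
    exact Finset.sum_congr rfl fun x _ => mul_comm _ _
  have h2 : ∀ x y, F x y * ((2:ℝ)⁻¹ * (g y - g x)) =
      (2:ℝ)⁻¹ * (F x y * g y) - (2:ℝ)⁻¹ * (F x y * g x) := fun x y => by ring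
  simp_rw [h2]
  rw [Finset.sum_congr rfl fun x _ => Finset.sum_sub_distrib _ _, Finset.sum_sub_distrib]
  simp_rw [← Finset.mul_sum]
  rw [h1, h3]
  ring

/-- on a simplex with face area vectors `a` summing to zero and
discretely divergence-free velocities `U`, with co-volume fluxes
`F σ σ' = (U σ + U σ' - (1/(d+1)) ∑ U) · ((a σ' - a σ)/(d+1))`,
the element contribution of the convection form reduces to the boundary fluxes:
`∑ σ ∑ σ' F σ σ' (U σ' - U σ)·((U σ + U σ')/2) = ∑ σ ‖U σ‖² (U σ · a σ)`. -/
theorem stmt_2 (d : ℕ) (hd : 1 ≤ d) (I : Type*) [Fintype I]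
    (hcard : Fintype.card I = d + 1)
    (a U : I → EuclideanSpace ℝ (Fin d))
    (ha : ∑ σ : I, a σ = 0)
    (hU : ∑ σ : I, ⟪U σ, a σ⟫ = 0) :
    ∑ σ : I, ∑ σ' : I,
      ⟪U σ + U σ' - ((d : ℝ) + 1)⁻¹ • ∑ σ'' : I, U σ'',
          ((d : ℝ) + 1)⁻¹ • (a σ' - a σ)⟫ *
        ⟪U σ' - U σ, (2 : ℝ)⁻¹ • (U σ + U σ')⟫ =
      ∑ σ : I, ‖U σ‖ ^ 2 * ⟪U σ, a σ⟫ := by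
  have hn : ((d:ℝ)+1) ≠ 0 := by positivity
  set S : EuclideanSpace ℝ (Fin d) := ∑ σ'' : I, U σ'' with hS
  have hG : ∀ σ σ' : I, ⟪U σ' - U σ, (2:ℝ)⁻¹ • (U σ + U σ')⟫ =
      (2:ℝ)⁻¹ * (‖U σ'‖^2 - ‖U σ‖^2) := by
    intro σ σ'
    rw [real_inner_smul_right]
    congr 1
    rw [inner_sub_left, inner_add_right, inner_add_right,
        real_inner_self_eq_norm_sq, real_inner_self_eq_norm_sq,
        real_inner_comm (U σ') (U σ)]
    ring
  have hanti : ∀ x y : I,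
      ⟪U x + U y - ((d:ℝ)+1)⁻¹ • S, ((d:ℝ)+1)⁻¹ • (a y - a x)⟫ =
        - ⟪U y + U x - ((d:ℝ)+1)⁻¹ • S, ((d:ℝ)+1)⁻¹ • (a x - a y)⟫ := by
    intro x y
    rw [show a y - a x = -(a x - a y) from (neg_sub _ _).symm, smul_neg, inner_neg_right,
      add_comm (U x) (U y)]
  have key : ∀ σ' : I,
      ∑ σ : I, ⟪U σ + U σ' - ((d:ℝ)+1)⁻¹ • S, ((d:ℝ)+1)⁻¹ • (a σ' - a σ)⟫
        = ⟪U σ', a σ'⟫ := by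
    intro σ'
    have expand : ∀ σ : I,
        ⟪U σ + U σ' - ((d:ℝ)+1)⁻¹ • S, ((d:ℝ)+1)⁻¹ • (a σ' - a σ)⟫
          = ((d:ℝ)+1)⁻¹ * ((⟪U σ, a σ'⟫ - ⟪U σ, a σ⟫)
              + (⟪U σ', a σ'⟫ - ⟪U σ', a σ⟫)
              - ((d:ℝ)+1)⁻¹ * (⟪S, a σ'⟫ - ⟪S, a σ⟫)) := by
      intro σ
      rw [real_inner_smul_right, inner_sub_left, inner_add_left, real_inner_smul_left,
          inner_sub_right, inner_sub_right, inner_sub_right]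
      try ring
    simp_rw [expand, ← Finset.mul_sum]
    have e1 : ∑ σ : I, (⟪U σ, a σ'⟫ - ⟪U σ, a σ⟫) = ⟪S, a σ'⟫ := by
      rw [Finset.sum_sub_distrib, hU, sub_zero, hS, sum_inner]
    have e2 : ∑ σ : I, (⟪U σ', a σ'⟫ - ⟪U σ', a σ⟫) = ((d:ℝ)+1) * ⟪U σ', a σ'⟫ := by
      rw [Finset.sum_sub_distrib, Finset.sum_const, ← inner_sum, ha, inner_zero_right, sub_zero,
          Finset.card_univ, hcard, nsmul_eq_mul]
      push_cast
      try ring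
    have e3 : ∑ σ : I, (⟪S, a σ'⟫ - ⟪S, a σ⟫) = ((d:ℝ)+1) * ⟪S, a σ'⟫ := by
      rw [Finset.sum_sub_distrib, Finset.sum_const, ← inner_sum, ha, inner_zero_right, sub_zero,
          Finset.card_univ, hcard, nsmul_eq_mul]
      push_cast
      try ring
    rw [Finset.sum_congr rfl fun σ _ => rfl]
    rw [show (∑ σ : I, ((⟪U σ, a σ'⟫ - ⟪U σ, a σ⟫)
        + (⟪U σ', a σ'⟫ - ⟪U σ', a σ⟫)
        - ((d:ℝ)+1)⁻¹ * (⟪S, a σ'⟫ - ⟪S, a σ⟫)))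
      = (∑ σ : I, (⟪U σ, a σ'⟫ - ⟪U σ, a σ⟫))
        + (∑ σ : I, (⟪U σ', a σ'⟫ - ⟪U σ', a σ⟫))
        - ((d:ℝ)+1)⁻¹ * (∑ σ : I, (⟪S, a σ'⟫ - ⟪S, a σ⟫)) from by
        rw [Finset.sum_sub_distrib, Finset.sum_add_distrib, ← Finset.mul_sum]]
    rw [e1, e2, e3]
    field_simp
    try ring
  calc ∑ σ : I, ∑ σ' : I,
        ⟪U σ + U σ' - ((d:ℝ)+1)⁻¹ • S, ((d:ℝ)+1)⁻¹ • (a σ' - a σ)⟫ *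
          ⟪U σ' - U σ, (2:ℝ)⁻¹ • (U σ + U σ')⟫
      = ∑ σ : I, ∑ σ' : I,
          ⟪U σ + U σ' - ((d:ℝ)+1)⁻¹ • S, ((d:ℝ)+1)⁻¹ • (a σ' - a σ)⟫ *
            ((2:ℝ)⁻¹ * (‖U σ'‖^2 - ‖U σ‖^2)) := by simp_rw [hG]
    _ = ∑ σ' : I, ‖U σ'‖^2 * ∑ σ : I,
          ⟪U σ + U σ' - ((d:ℝ)+1)⁻¹ • S, ((d:ℝ)+1)⁻¹ • (a σ' - a σ)⟫ :=
        aux_sum _ (fun σ => ‖U σ‖^2) hanti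
    _ = ∑ σ : I, ‖U σ‖ ^ 2 * ⟪U σ, a σ⟫ := by
        refine Finset.sum_congr rfl fun σ' _ => ?_
        rw [key σ']
end

section
/- Let Â be an invertible n̂ × n̂ real matrix, D̂ an m × n̂ real matrix, Ĉ a p × n̂ real matrix, and R̂ ∈ ℝ^{n̂}. Assume B := D̂ Â⁻¹ D̂ᵀ is invertible. Set T := Â⁻¹ − Â⁻¹ D̂ᵀ B⁻¹ D̂ Â⁻¹, G := Ĉ T Ĉᵀ and S := Ĉ T R̂. Then for all vectors Û ∈ ℝ^{n̂}, P ∈ ℝ^m, Ŵ ∈ ℝ^p, the three equations Â Û + D̂ᵀ P + Ĉᵀ Ŵ = R̂, D̂ Û = 0, Ĉ Û = 0 hold if and only if G Ŵ = S, P = B⁻¹ D̂ Â⁻¹ (R̂ − Ĉᵀ Ŵ), and Û = Â⁻¹ (R̂ − D̂ᵀ P − Ĉᵀ Ŵ). -/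
open Matrix

/-- exact two-stage block elimination for the hybridised system:
with `Â` invertible and `B = D̂Â⁻¹D̂ᵀ` invertible, setting
`T = Â⁻¹ - Â⁻¹D̂ᵀB⁻¹D̂Â⁻¹`, `G = ĈTĈᵀ`, `S = ĈTR̂`, the block system
`ÂÛ + D̂ᵀP + ĈᵀŴ = R̂`, `D̂Û = 0`, `ĈÛ = 0` is equivalent to
`GŴ = S`, `P = B⁻¹D̂Â⁻¹(R̂ - ĈᵀŴ)`, `Û = Â⁻¹(R̂ - D̂ᵀP - ĈᵀŴ)`. -/
theorem stmt_10 (nh m p : ℕ)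
    (A : Matrix (Fin nh) (Fin nh) ℝ) (hA : IsUnit A)
    (D : Matrix (Fin m) (Fin nh) ℝ) (C : Matrix (Fin p) (Fin nh) ℝ)
    (R : Fin nh → ℝ)
    (B : Matrix (Fin m) (Fin m) ℝ) (hBdef : B = D * A⁻¹ * Dᵀ) (hB : IsUnit B)
    (T : Matrix (Fin nh) (Fin nh) ℝ) (hT : T = A⁻¹ - A⁻¹ * Dᵀ * B⁻¹ * D * A⁻¹)
    (G : Matrix (Fin p) (Fin p) ℝ) (hG : G = C * T * Cᵀ)
    (S : Fin p → ℝ) (hS : S = (C * T) *ᵥ R) :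
    ∀ (U : Fin nh → ℝ) (P : Fin m → ℝ) (W : Fin p → ℝ),
      (A *ᵥ U + Dᵀ *ᵥ P + Cᵀ *ᵥ W = R ∧ D *ᵥ U = 0 ∧ C *ᵥ U = 0) ↔
        (G *ᵥ W = S ∧
          P = (B⁻¹ * D * A⁻¹) *ᵥ (R - Cᵀ *ᵥ W) ∧
          U = A⁻¹ *ᵥ (R - Dᵀ *ᵥ P - Cᵀ *ᵥ W)) := by
  have hAdet : IsUnit A.det := (Matrix.isUnit_iff_isUnit_det A).mp hA
  have hBdet : IsUnit B.det := (Matrix.isUnit_iff_isUnit_det B).mp hB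
  have hAi : A⁻¹ * A = 1 := Matrix.nonsing_inv_mul A hAdet
  have hAi' : A * A⁻¹ = 1 := Matrix.mul_nonsing_inv A hAdet
  have hBi : B⁻¹ * B = 1 := Matrix.nonsing_inv_mul B hBdet
  have hBi' : B * B⁻¹ = 1 := Matrix.mul_nonsing_inv B hBdet
  -- key matrix identity: D * T = 0
  have hDT : D * T = 0 := by
    have h1 : D * (A⁻¹ * Dᵀ * B⁻¹ * D * A⁻¹) = B * B⁻¹ * (D * A⁻¹) := by
      rw [hBdef]; simp only [Matrix.mul_assoc]
    rw [hT, Matrix.mul_sub, h1, hBi', Matrix.one_mul, sub_self]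
  intro U P W
  constructor
  · rintro ⟨h1, h2, h3⟩
    have hAU : A *ᵥ U = R - Dᵀ *ᵥ P - Cᵀ *ᵥ W := by rw [← h1]; abel
    have hU : U = A⁻¹ *ᵥ (R - Dᵀ *ᵥ P - Cᵀ *ᵥ W) := by
      rw [← hAU, Matrix.mulVec_mulVec, hAi, Matrix.one_mulVec]
    -- derive P
    have hsplit : R - Dᵀ *ᵥ P - Cᵀ *ᵥ W = (R - Cᵀ *ᵥ W) - Dᵀ *ᵥ P := by abel
    have hDU : (D * A⁻¹) *ᵥ (R - Cᵀ *ᵥ W) - B *ᵥ P = 0 := by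
      calc (D * A⁻¹) *ᵥ (R - Cᵀ *ᵥ W) - B *ᵥ P
          = D *ᵥ U := by
            rw [hU, hsplit, hBdef]
            simp only [Matrix.mulVec_mulVec, Matrix.mulVec_sub, Matrix.mul_assoc]
        _ = 0 := h2
    have hBP : B *ᵥ P = (D * A⁻¹) *ᵥ (R - Cᵀ *ᵥ W) := (sub_eq_zero.mp hDU).symm
    have hP : P = (B⁻¹ * D * A⁻¹) *ᵥ (R - Cᵀ *ᵥ W) := by
      calc P = B⁻¹ *ᵥ (B *ᵥ P) := by
            rw [Matrix.mulVec_mulVec, hBi, Matrix.one_mulVec]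
        _ = (B⁻¹ * D * A⁻¹) *ᵥ (R - Cᵀ *ᵥ W) := by
            rw [hBP, Matrix.mulVec_mulVec]
            simp only [Matrix.mul_assoc]
    -- U = T *ᵥ (R - CᵀW)
    have hUT : U = T *ᵥ (R - Cᵀ *ᵥ W) := by
      rw [hU, hsplit, Matrix.mulVec_sub, hP, Matrix.mulVec_mulVec, hT,
        Matrix.sub_mulVec]
      rw [Matrix.mulVec_mulVec]
      congr 1
      simp only [Matrix.mul_assoc]
    have hGW : G *ᵥ W = S := by
      have hCU : (C * T) *ᵥ R - (C * T * Cᵀ) *ᵥ W = 0 := by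
        calc (C * T) *ᵥ R - (C * T * Cᵀ) *ᵥ W
            = C *ᵥ U := by
              rw [hUT, Matrix.mulVec_mulVec, Matrix.mulVec_sub, Matrix.mulVec_mulVec]
          _ = 0 := h3
      rw [hG, hS]
      exact (sub_eq_zero.mp hCU).symm
    exact ⟨hGW, hP, hU⟩
  · rintro ⟨hGW, hP, hU⟩
    have hsplit : R - Dᵀ *ᵥ P - Cᵀ *ᵥ W = (R - Cᵀ *ᵥ W) - Dᵀ *ᵥ P := by abel
    have hUT : U = T *ᵥ (R - Cᵀ *ᵥ W) := by
      rw [hU, hsplit, Matrix.mulVec_sub, hP, Matrix.mulVec_mulVec, hT,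
        Matrix.sub_mulVec]
      rw [Matrix.mulVec_mulVec]
      congr 1
      simp only [Matrix.mul_assoc]
    refine ⟨?_, ?_, ?_⟩
    · have : A *ᵥ U = R - Dᵀ *ᵥ P - Cᵀ *ᵥ W := by
        rw [hU, Matrix.mulVec_mulVec, hAi', Matrix.one_mulVec]
      rw [this]; abel
    · rw [hUT, Matrix.mulVec_mulVec, hDT, Matrix.zero_mulVec]
    · rw [hUT, Matrix.mulVec_mulVec, Matrix.mulVec_sub, Matrix.mulVec_mulVec,
        ← hG, hGW, ← hS, sub_self]
end

section
/- Let Â be an invertible n̂ × n̂ real matrix, D̂ an m × n̂ real matrix and Ĉ a p × n̂ real matrix. Assume B := D̂ Â⁻¹ D̂ᵀ is invertible and that the homogeneous block system has trivial kernel, in the sense that if Û ∈ ℝ^{n̂}, P ∈ ℝ^m, Ŵ ∈ ℝ^p satisfy Â Û + D̂ᵀ P + Ĉᵀ Ŵ = 0, D̂ Û = 0 and Ĉ Û = 0, then Ŵ = 0. Then the p × p matrix G := Ĉ (Â⁻¹ − Â⁻¹ D̂ᵀ B⁻¹ D̂ Â⁻¹) Ĉᵀ is invertible. -/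
open Matrix

/-- if `Â` is invertible, the Schur complement `B = D̂Â⁻¹D̂ᵀ` is
invertible, and the homogeneous block system only has solutions with `Ŵ = 0`,
then the reduced matrix `G = Ĉ(Â⁻¹ - Â⁻¹D̂ᵀB⁻¹D̂Â⁻¹)Ĉᵀ` is invertible. -/
theorem stmt_11 (nh m p : ℕ)
    (A : Matrix (Fin nh) (Fin nh) ℝ) (hA : IsUnit A)
    (D : Matrix (Fin m) (Fin nh) ℝ) (C : Matrix (Fin p) (Fin nh) ℝ)
    (hB : IsUnit (D * A⁻¹ * Dᵀ))
    (hker : ∀ (U : Fin nh → ℝ) (P : Fin m → ℝ) (W : Fin p → ℝ),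
      A *ᵥ U + Dᵀ *ᵥ P + Cᵀ *ᵥ W = 0 → D *ᵥ U = 0 → C *ᵥ U = 0 → W = 0) :
    IsUnit (C * (A⁻¹ - A⁻¹ * Dᵀ * (D * A⁻¹ * Dᵀ)⁻¹ * D * A⁻¹) * Cᵀ) := by
  set B := D * A⁻¹ * Dᵀ with hBdef
  set E := A⁻¹ - A⁻¹ * Dᵀ * B⁻¹ * D * A⁻¹ with hEdef
  have hAinv : A * A⁻¹ = 1 := mul_nonsing_inv A ((isUnit_iff_isUnit_det A).mp hA)
  have hBinv : B * B⁻¹ = 1 := mul_nonsing_inv B ((isUnit_iff_isUnit_det B).mp hB)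
  -- key matrix identities
  have h1 : A * (E * Cᵀ) + Dᵀ * (B⁻¹ * D * A⁻¹ * Cᵀ) = Cᵀ := by
    simp only [hEdef, Matrix.sub_mul, Matrix.mul_sub, ← Matrix.mul_assoc,
      hAinv, Matrix.one_mul]
    abel
  have h2 : D * (E * Cᵀ) = 0 := by
    simp only [hEdef, Matrix.sub_mul, Matrix.mul_sub, ← Matrix.mul_assoc]
    rw [← hBdef, Matrix.mul_assoc B, ← Matrix.mul_assoc B B⁻¹, hBinv,
      Matrix.one_mul, Matrix.mul_assoc, sub_self]
  rw [← Matrix.mulVec_injective_iff_isUnit]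
  have key : ∀ W : Fin p → ℝ, (C * E * Cᵀ) *ᵥ W = 0 → W = 0 := by
    intro W hW
    refine hker (-((E * Cᵀ) *ᵥ W)) (-((B⁻¹ * D * A⁻¹ * Cᵀ) *ᵥ W)) W ?_ ?_ ?_
    · have h1' := congrArg (· *ᵥ W) h1
      simp only [Matrix.add_mulVec] at h1'
      rw [Matrix.mulVec_neg, Matrix.mulVec_neg, Matrix.mulVec_mulVec,
        Matrix.mulVec_mulVec, ← h1']
      abel
    · rw [Matrix.mulVec_neg, Matrix.mulVec_mulVec, h2, Matrix.zero_mulVec,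
        neg_zero]
    · rw [Matrix.mulVec_neg, Matrix.mulVec_mulVec, ← Matrix.mul_assoc, hW,
        neg_zero]
  intro x y hxy
  have hsub : (C * E * Cᵀ) *ᵥ (x - y) = 0 := by
    rw [Matrix.mulVec_sub, hxy, sub_self]
  exact sub_eq_zero.mp (key _ hsub)
end

section
/- Hybrid selector setup: let ι be a finite index set, n̂ ∈ ℕ, and for each K ∈ ι let s_K ∈ ℕ and let Ĥ_K be a real n̂ × s_K matrix such that Ĥ_Kᵀ Ĥ_K is the s_K × s_K identity, Ĥ_Kᵀ Ĥ_L = 0 for K ≠ L, and Σ_{K∈ι} Ĥ_K Ĥ_Kᵀ is the n̂ × n̂ identity. Let n, m ∈ ℕ and for each K ∈ ι let H_K be a real n × s_K matrix, A_K, E_K, C_K real s_K × s_K matrices, D_K ∈ ℝ^{s_K}, F_K ∈ ℝ^m and R_K ∈ ℝ^{s_K}. Assume Σ_{K∈ι} H_K E_K H_Kᵀ = 0 and Σ_{K∈ι} H_K C_Kᵀ H_Kᵀ = 0. Define A = Σ_K H_K A_K H_Kᵀ, Â = Σ_K Ĥ_K (A_K + E_K) Ĥ_Kᵀ, D = Σ_K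 F_K D_Kᵀ H_Kᵀ, D̂ = Σ_K F_K D_Kᵀ Ĥ_Kᵀ, Ĉ = Σ_K H_K C_K Ĥ_Kᵀ, R = Σ_K H_K R_K, R̂ = Σ_K Ĥ_K R_K. Let Û ∈ ℝ^{n̂}, U ∈ ℝⁿ, P ∈ ℝ^m, Ŵ ∈ ℝⁿ be such that Ĥ_Kᵀ Û = H_Kᵀ U for every K ∈ ι, Â Û + D̂ᵀ P + Ĉᵀ Ŵ = R̂ and D̂ Û = 0. Then A U + Dᵀ P = R and D U = 0. -/
open Matrix Finset

private lemma sum_mulVec_aux {ι α β : Type*} [Fintype ι] [Fintype β]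
    (M : ι → Matrix α β ℝ) (v : β → ℝ) :
    (∑ K, M K) *ᵥ v = ∑ K, M K *ᵥ v := by
  ext j
  simp only [mulVec, dotProduct, Matrix.sum_apply, Finset.sum_apply, Finset.sum_mul]
  exact Finset.sum_comm

private lemma mulVec_sum_aux {ι α β : Type*} [Fintype ι] [Fintype β]
    (M : Matrix α β ℝ) (v : ι → β → ℝ) :
    M *ᵥ (∑ K, v K) = ∑ K, M *ᵥ v K :=
  map_sum M.mulVecLin v Finset.univ

/-- recovery property of the hybridised Crouzeix-Raviart scheme:
if the duplicated velocities `Û` agree with the common values `U` on each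
element (i.e. `Ĥ_Kᵀ Û = H_Kᵀ U`), the elementary corrections assemble to zero
(`∑ H_K E_K H_Kᵀ = 0`, `∑ H_K C_Kᵀ H_Kᵀ = 0`), and `(Û, P, Ŵ)` solves the
hybridised momentum and divergence equations, then `(U, P)` solves the
original coupled system `A U + Dᵀ P = R`, `D U = 0`. -/
theorem stmt_12 (ι : Type*) [Fintype ι] [DecidableEq ι] (nh n m : ℕ) (s : ι → ℕ)
    (Hh : (K : ι) → Matrix (Fin nh) (Fin (s K)) ℝ)
    (horth : ∀ K, (Hh K)ᵀ * Hh K = 1)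
    (hdisj : ∀ K L, K ≠ L → (Hh K)ᵀ * Hh L = 0)
    (hcomp : ∑ K, Hh K * (Hh K)ᵀ = 1)
    (H : (K : ι) → Matrix (Fin n) (Fin (s K)) ℝ)
    (A E C : (K : ι) → Matrix (Fin (s K)) (Fin (s K)) ℝ)
    (D : (K : ι) → Fin (s K) → ℝ) (F : ι → Fin m → ℝ)
    (R : (K : ι) → Fin (s K) → ℝ)
    (hE : ∑ K, H K * E K * (H K)ᵀ = 0)
    (hC : ∑ K, H K * (C K)ᵀ * (H K)ᵀ = 0)
    (Uh : Fin nh → ℝ) (U : Fin n → ℝ) (P : Fin m → ℝ) (W : Fin n → ℝ)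
    (hUU : ∀ K, (Hh K)ᵀ *ᵥ Uh = (H K)ᵀ *ᵥ U)
    (heq : (∑ K, Hh K * (A K + E K) * (Hh K)ᵀ) *ᵥ Uh +
        (∑ K, vecMulVec (F K) (D K) * (Hh K)ᵀ)ᵀ *ᵥ P +
        (∑ K, H K * C K * (Hh K)ᵀ)ᵀ *ᵥ W = ∑ K, Hh K *ᵥ R K)
    (hdiv : (∑ K, vecMulVec (F K) (D K) * (Hh K)ᵀ) *ᵥ Uh = 0) :
    (∑ K, H K * A K * (H K)ᵀ) *ᵥ U +
        (∑ K, vecMulVec (F K) (D K) * (H K)ᵀ)ᵀ *ᵥ P = ∑ K, H K *ᵥ R K ∧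
      (∑ K, vecMulVec (F K) (D K) * (H K)ᵀ) *ᵥ U = 0 := by
  -- the gluing matrix
  set T : Matrix (Fin n) (Fin nh) ℝ := ∑ K, H K * (Hh K)ᵀ with hT
  have hTH : ∀ L, T * Hh L = H L := by
    intro L
    rw [hT, Matrix.sum_mul, Finset.sum_eq_single L]
    · rw [Matrix.mul_assoc, horth, Matrix.mul_one]
    · intro K _ hKL
      rw [Matrix.mul_assoc, hdisj K L hKL, Matrix.mul_zero]
    · intro h; exact absurd (Finset.mem_univ L) h
  constructor
  · -- momentum equation
    have key := congrArg (fun v => T *ᵥ v) heq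
    simp only [Matrix.mulVec_add, Matrix.mulVec_mulVec] at key
    -- term 1
    have t1 : (T * ∑ K, Hh K * (A K + E K) * (Hh K)ᵀ) *ᵥ Uh
        = (∑ K, H K * A K * (H K)ᵀ) *ᵥ U := by
      have e1 : T * (∑ K, Hh K * (A K + E K) * (Hh K)ᵀ)
          = ∑ K, H K * (A K + E K) * (Hh K)ᵀ := by
        rw [Matrix.mul_sum]
        refine Finset.sum_congr rfl fun K _ => ?_
        rw [← Matrix.mul_assoc, ← Matrix.mul_assoc, hTH K]
      rw [e1, sum_mulVec_aux (fun K => H K * (A K + E K) * (Hh K)ᵀ) Uh]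
      have e2 : ∀ K : ι, (H K * (A K + E K) * (Hh K)ᵀ) *ᵥ Uh
          = (H K * (A K + E K) * (H K)ᵀ) *ᵥ U := by
        intro K
        rw [← Matrix.mulVec_mulVec, hUU K, Matrix.mulVec_mulVec]
      rw [Finset.sum_congr rfl fun K _ => e2 K,
        ← sum_mulVec_aux (fun K => H K * (A K + E K) * (H K)ᵀ) U]
      congr 1
      have expand : ∑ K, H K * (A K + E K) * (H K)ᵀ
          = (∑ K, H K * A K * (H K)ᵀ) + ∑ K, H K * E K * (H K)ᵀ := by
        rw [← Finset.sum_add_distrib]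
        exact Finset.sum_congr rfl fun K _ => by rw [Matrix.mul_add, Matrix.add_mul]
      rw [expand, hE, add_zero]
    -- term 2
    have t2 : T * (∑ K, vecMulVec (F K) (D K) * (Hh K)ᵀ)ᵀ
        = (∑ K, vecMulVec (F K) (D K) * (H K)ᵀ)ᵀ := by
      rw [Matrix.transpose_sum, Matrix.transpose_sum, Matrix.mul_sum]
      refine Finset.sum_congr rfl fun K _ => ?_
      rw [Matrix.transpose_mul, Matrix.transpose_mul, Matrix.transpose_transpose,
        Matrix.transpose_transpose, ← Matrix.mul_assoc, hTH K]
    -- term 3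
    have t3 : T * (∑ K, H K * C K * (Hh K)ᵀ)ᵀ = 0 := by
      rw [Matrix.transpose_sum, Matrix.mul_sum]
      have e3 : ∀ K : ι, T * (H K * C K * (Hh K)ᵀ)ᵀ = H K * (C K)ᵀ * (H K)ᵀ := by
        intro K
        rw [Matrix.transpose_mul, Matrix.transpose_transpose, ← Matrix.mul_assoc, hTH K,
          Matrix.transpose_mul, ← Matrix.mul_assoc]
      rw [Finset.sum_congr rfl fun K _ => e3 K, hC]
    -- RHS
    have tr : T *ᵥ (∑ K, Hh K *ᵥ R K) = ∑ K, H K *ᵥ R K := by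
      rw [mulVec_sum_aux]
      refine Finset.sum_congr rfl fun K _ => ?_
      rw [Matrix.mulVec_mulVec, hTH K]
    rw [t1, t2, t3, Matrix.zero_mulVec, add_zero, tr] at key
    exact key
  · -- divergence equation
    rw [sum_mulVec_aux (fun K => vecMulVec (F K) (D K) * (H K)ᵀ) U]
    rw [sum_mulVec_aux (fun K => vecMulVec (F K) (D K) * (Hh K)ᵀ) Uh] at hdiv
    rw [← hdiv]
    refine Finset.sum_congr rfl fun K _ => ?_
    rw [← Matrix.mulVec_mulVec, ← Matrix.mulVec_mulVec, hUU K]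
end

section
/- Hybrid selector setup: let ι be a finite index set, n̂ ∈ ℕ, and for each K ∈ ι let s_K ∈ ℕ and let Ĥ_K be a real n̂ × s_K matrix such that Ĥ_Kᵀ Ĥ_K is the s_K × s_K identity, Ĥ_Kᵀ Ĥ_L = 0 for K ≠ L, and Σ_{K∈ι} Ĥ_K Ĥ_Kᵀ is the n̂ × n̂ identity. Let K₀ ∈ ι, n, m ∈ ℕ, and for each K ∈ ι with K ≠ K₀ let F_K ∈ ℝ^m satisfy F_Kᵀ F_K = 1, F_Kᵀ F_L = 0 for K ≠ L, and Σ_{K≠K₀} F_K F_Kᵀ = identity of ℝ^m. For each K ∈ ι let Â_K be an invertible s_K × s_K real matrix, C_K an s_K × s_K real matrix, H_K a real n × s_K matrix, and D_K ∈ ℝ^{s_K}; assume B_K := D_Kᵀ Â_K⁻¹ D_K ≠ 0 for all K ≠ K₀. Define Â = Σ_K Ĥ_K Â_K Ĥ_Kᵀ, D̂ = Σ_{K≠K₀} F_K D_Kᵀ Ĥ_Kᵀ, Ĉ = Σ_K H_K C_K Ĥ_Kᵀ, and B = D̂ Â⁻¹ D̂ᵀ. Then B is invertible with B⁻¹ =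 Σ_{K≠K₀} (1/B_K) F_K F_Kᵀ, and G := Ĉ (Â⁻¹ − Â⁻¹ D̂ᵀ B⁻¹ D̂ Â⁻¹) Ĉᵀ = Σ_{K≠K₀} H_K [C_K (Â_K⁻¹ − (1/B_K) Â_K⁻¹ D_K D_Kᵀ Â_K⁻¹) C_Kᵀ] H_Kᵀ + H_{K₀} C_{K₀} Â_{K₀}⁻¹ C_{K₀}ᵀ H_{K₀}ᵀ. -/
open Matrix Finset

/-- column matrix of a vector -/
def cmS13 {m : ℕ} (v : Fin m → ℝ) : Matrix (Fin m) (Fin 1) ℝ :=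
  Matrix.of fun i _ => v i

lemma vmv_eqS13 {m q : ℕ} (a : Fin m → ℝ) (b : Fin q → ℝ) :
    vecMulVec a b = cmS13 a * (cmS13 b)ᵀ := by
  ext i j
  simp [cmS13, vecMulVec, Matrix.mul_apply]

lemma cmT_mul_cmS13 {m : ℕ} (a b : Fin m → ℝ) :
    (cmS13 a)ᵀ * cmS13 b = (a ⬝ᵥ b) • (1 : Matrix (Fin 1) (Fin 1) ℝ) := by
  ext i j
  simp [cmS13, Matrix.mul_apply, dotProduct, Matrix.one_apply, Subsingleton.elim i j]

lemma rowcolS13 {a : ℕ} (v w : Fin a → ℝ) (M : Matrix (Fin a) (Fin a) ℝ) :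
    (cmS13 v)ᵀ * (M * cmS13 w) = (v ⬝ᵥ M *ᵥ w) • (1 : Matrix (Fin 1) (Fin 1) ℝ) := by
  ext i j
  simp [cmS13, Matrix.mul_apply, dotProduct, Matrix.mulVec, Matrix.one_apply,
    Subsingleton.elim i j, Finset.mul_sum]

lemma sandS13 {m a : ℕ} (f g : Fin m → ℝ) (v w : Fin a → ℝ) (M : Matrix (Fin a) (Fin a) ℝ) :
    (cmS13 f * (cmS13 v)ᵀ * M) * (cmS13 w * (cmS13 g)ᵀ)
      = (v ⬝ᵥ M *ᵥ w) • (cmS13 f * (cmS13 g)ᵀ) := by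
  have h1 : (cmS13 f * (cmS13 v)ᵀ * M) * (cmS13 w * (cmS13 g)ᵀ)
      = cmS13 f * ((cmS13 v)ᵀ * (M * cmS13 w)) * (cmS13 g)ᵀ := by
    simp only [Matrix.mul_assoc]
  rw [h1, rowcolS13, Matrix.mul_smul, Matrix.mul_one, Matrix.smul_mul]

lemma mixS13 {ι : Type*} [DecidableEq ι] {s : ι → ℕ} {N p q : ℕ}
    (W : (K : ι) → Matrix (Fin N) (Fin (s K)) ℝ)
    (t u : Finset ι)
    (horth : ∀ K ∈ t, K ∈ u → (W K)ᵀ * W K = 1)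
    (hdisj : ∀ K ∈ t, ∀ L ∈ u, K ≠ L → (W K)ᵀ * W L = 0)
    (P : (K : ι) → Matrix (Fin p) (Fin (s K)) ℝ)
    (Q : (K : ι) → Matrix (Fin (s K)) (Fin q) ℝ) :
    (∑ K ∈ t, P K * (W K)ᵀ) * (∑ K ∈ u, W K * Q K) = ∑ K ∈ t ∩ u, P K * Q K := by
  rw [Matrix.sum_mul]
  have h : ∀ K ∈ t, (P K * (W K)ᵀ) * (∑ L ∈ u, W L * Q L)
      = if K ∈ u then P K * Q K else 0 := by
    intro K hK
    rw [Matrix.mul_sum]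
    split_ifs with hKu
    · rw [Finset.sum_eq_single_of_mem K hKu]
      · rw [Matrix.mul_assoc, ← Matrix.mul_assoc ((W K)ᵀ), horth K hK hKu, Matrix.one_mul]
      · intro L hL hne
        rw [Matrix.mul_assoc, ← Matrix.mul_assoc ((W K)ᵀ), hdisj K hK L hL hne.symm,
          Matrix.zero_mul, Matrix.mul_zero]
    · refine Finset.sum_eq_zero fun L hL => ?_
      have hne : K ≠ L := fun e => hKu (e ▸ hL)
      rw [Matrix.mul_assoc, ← Matrix.mul_assoc ((W K)ᵀ), hdisj K hK L hL hne,
        Matrix.zero_mul, Matrix.mul_zero]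
  rw [Finset.sum_congr rfl h, Finset.sum_ite_mem]

/-- stencil property of the reduced matrix of the hybridised
Crouzeix-Raviart scheme: the Schur complement `B = D̂Â⁻¹D̂ᵀ` is invertible with
`B⁻¹ = ∑_{K≠K₀} (1/B_K) F_K F_Kᵀ`, and the reduced matrix
`G = Ĉ(Â⁻¹ - Â⁻¹D̂ᵀB⁻¹D̂Â⁻¹)Ĉᵀ` is assembled from the elementary matrices
`G_K = C_K(Â_K⁻¹ - (1/B_K)Â_K⁻¹D_K D_KᵀÂ_K⁻¹)C_Kᵀ` (with
`G_{K₀} = C_{K₀}Â_{K₀}⁻¹C_{K₀}ᵀ`) through the same selector matrices `H_K`. -/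
theorem stmt_13 (ι : Type*) [Fintype ι] [DecidableEq ι] (nh n m : ℕ) (s : ι → ℕ)
    (Hh : (K : ι) → Matrix (Fin nh) (Fin (s K)) ℝ)
    (horth : ∀ K, (Hh K)ᵀ * Hh K = 1)
    (hdisj : ∀ K L, K ≠ L → (Hh K)ᵀ * Hh L = 0)
    (hcomp : ∑ K, Hh K * (Hh K)ᵀ = 1)
    (K₀ : ι) (F : ι → Fin m → ℝ)
    (hF1 : ∀ K, K ≠ K₀ → F K ⬝ᵥ F K = 1)
    (hF2 : ∀ K L, K ≠ K₀ → L ≠ K₀ → K ≠ L → F K ⬝ᵥ F L = 0)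
    (hFcomp : ∑ K ∈ univ.erase K₀, vecMulVec (F K) (F K) = 1)
    (A C : (K : ι) → Matrix (Fin (s K)) (Fin (s K)) ℝ)
    (hA : ∀ K, IsUnit (A K))
    (H : (K : ι) → Matrix (Fin n) (Fin (s K)) ℝ)
    (D : (K : ι) → Fin (s K) → ℝ)
    (hBK : ∀ K, K ≠ K₀ → D K ⬝ᵥ ((A K)⁻¹ *ᵥ D K) ≠ 0)
    (Ahat : Matrix (Fin nh) (Fin nh) ℝ)
    (hAhat : Ahat = ∑ K, Hh K * A K * (Hh K)ᵀ)
    (Dhat : Matrix (Fin m) (Fin nh) ℝ)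
    (hDhat : Dhat = ∑ K ∈ univ.erase K₀, vecMulVec (F K) (D K) * (Hh K)ᵀ)
    (Chat : Matrix (Fin n) (Fin nh) ℝ)
    (hChat : Chat = ∑ K, H K * C K * (Hh K)ᵀ)
    (B : Matrix (Fin m) (Fin m) ℝ)
    (hB : B = Dhat * Ahat⁻¹ * Dhatᵀ) :
    IsUnit B ∧
      B⁻¹ = ∑ K ∈ univ.erase K₀,
        (D K ⬝ᵥ ((A K)⁻¹ *ᵥ D K))⁻¹ • vecMulVec (F K) (F K) ∧
      Chat * (Ahat⁻¹ - Ahat⁻¹ * Dhatᵀ * B⁻¹ * Dhat * Ahat⁻¹) * Chatᵀ =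
        (∑ K ∈ univ.erase K₀,
          H K * (C K * ((A K)⁻¹ -
            (D K ⬝ᵥ ((A K)⁻¹ *ᵥ D K))⁻¹ •
              ((A K)⁻¹ * vecMulVec (D K) (D K) * (A K)⁻¹)) * (C K)ᵀ) * (H K)ᵀ) +
          H K₀ * (C K₀ * (A K₀)⁻¹ * (C K₀)ᵀ) * (H K₀)ᵀ := by
  classical
  have detA : ∀ K, IsUnit (A K).det := fun K => (Matrix.isUnit_iff_isUnit_det _).mp (hA K)
  have horth' : ∀ t u : Finset ι, ∀ K ∈ t, K ∈ u → (Hh K)ᵀ * Hh K = 1 :=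
    fun _ _ K _ _ => horth K
  have hdisj' : ∀ t u : Finset ι, ∀ K ∈ t, ∀ L ∈ u, K ≠ L → (Hh K)ᵀ * Hh L = 0 :=
    fun _ _ K _ L _ h => hdisj K L h
  have gorth : ∀ K ∈ univ.erase K₀, K ∈ univ.erase K₀ →
      (cmS13 (F K))ᵀ * cmS13 (F K) = 1 := by
    intro K hK _
    rw [cmT_mul_cmS13, hF1 K (Finset.ne_of_mem_erase hK), one_smul]
  have gdisj : ∀ K ∈ univ.erase K₀, ∀ L ∈ univ.erase K₀, K ≠ L →
      (cmS13 (F K))ᵀ * cmS13 (F L) = 0 := by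
    intro K hK L hL hne
    rw [cmT_mul_cmS13, hF2 K L (Finset.ne_of_mem_erase hK) (Finset.ne_of_mem_erase hL) hne,
      zero_smul]
  -- inverse of Ahat
  have hAinv : Ahat⁻¹ = ∑ K, Hh K * ((A K)⁻¹ * (Hh K)ᵀ) := by
    apply Matrix.inv_eq_right_inv
    rw [hAhat, mixS13 Hh univ univ (horth' _ _) (hdisj' _ _)
      (fun K => Hh K * A K) (fun K => (A K)⁻¹ * (Hh K)ᵀ), Finset.univ_inter, ← hcomp]
    refine Finset.sum_congr rfl fun K _ => ?_
    rw [Matrix.mul_assoc, ← Matrix.mul_assoc (A K) ((A K)⁻¹),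
      Matrix.mul_nonsing_inv _ (detA K), Matrix.one_mul]
  have hAinvL : Ahat⁻¹ = ∑ K, (Hh K * (A K)⁻¹) * (Hh K)ᵀ := by
    rw [hAinv]; exact Finset.sum_congr rfl fun K _ => by simp only [Matrix.mul_assoc]
  -- canonical forms of Dhat
  have hD1 : Dhat = ∑ K ∈ univ.erase K₀, (cmS13 (F K) * (cmS13 (D K))ᵀ) * (Hh K)ᵀ := by
    rw [hDhat]; exact Finset.sum_congr rfl fun K _ => by rw [vmv_eqS13]
  have hD2 : Dhat = ∑ K ∈ univ.erase K₀, cmS13 (F K) * ((cmS13 (D K))ᵀ * (Hh K)ᵀ) := by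
    rw [hD1]; exact Finset.sum_congr rfl fun K _ => by simp only [Matrix.mul_assoc]
  have hDT : Dhatᵀ = ∑ K ∈ univ.erase K₀, Hh K * (cmS13 (D K) * (cmS13 (F K))ᵀ) := by
    rw [hD1, Matrix.transpose_sum]
    refine Finset.sum_congr rfl fun K _ => ?_
    simp [Matrix.transpose_mul, Matrix.mul_assoc]
  have hCT : Chatᵀ = ∑ K, Hh K * ((C K)ᵀ * (H K)ᵀ) := by
    rw [hChat, Matrix.transpose_sum]
    refine Finset.sum_congr rfl fun K _ => ?_
    simp [Matrix.transpose_mul, Matrix.mul_assoc]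
  -- value of B
  have hS1 : Dhat * Ahat⁻¹ = ∑ K ∈ univ.erase K₀,
      (cmS13 (F K) * (cmS13 (D K))ᵀ) * ((A K)⁻¹ * (Hh K)ᵀ) := by
    rw [hD1, hAinv, mixS13 Hh _ _ (horth' _ _) (hdisj' _ _)
      (fun K => cmS13 (F K) * (cmS13 (D K))ᵀ) (fun K => (A K)⁻¹ * (Hh K)ᵀ),
      Finset.inter_univ]
  have hBval : B = ∑ K ∈ univ.erase K₀,
      (D K ⬝ᵥ ((A K)⁻¹ *ᵥ D K)) • (cmS13 (F K) * (cmS13 (F K))ᵀ) := by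
    rw [hB, hS1]
    have l1 : (∑ K ∈ univ.erase K₀, (cmS13 (F K) * (cmS13 (D K))ᵀ) * ((A K)⁻¹ * (Hh K)ᵀ))
        = ∑ K ∈ univ.erase K₀, (cmS13 (F K) * (cmS13 (D K))ᵀ * (A K)⁻¹) * (Hh K)ᵀ :=
      Finset.sum_congr rfl fun K _ => by simp only [Matrix.mul_assoc]
    rw [l1, hDT, mixS13 Hh _ _ (horth' _ _) (hdisj' _ _)
      (fun K => cmS13 (F K) * (cmS13 (D K))ᵀ * (A K)⁻¹)
      (fun K => cmS13 (D K) * (cmS13 (F K))ᵀ), Finset.inter_self]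
    exact Finset.sum_congr rfl fun K _ => sandS13 _ _ _ _ _
  -- the inverse of B
  have hGcomp : ∑ K ∈ univ.erase K₀, cmS13 (F K) * (cmS13 (F K))ᵀ = 1 := by
    rw [← hFcomp]; exact Finset.sum_congr rfl fun K _ => (vmv_eqS13 _ _).symm
  have hBinvR : (∑ K ∈ univ.erase K₀,
        (D K ⬝ᵥ ((A K)⁻¹ *ᵥ D K))⁻¹ • (cmS13 (F K) * (cmS13 (F K))ᵀ))
      = ∑ K ∈ univ.erase K₀,
        cmS13 (F K) * ((D K ⬝ᵥ ((A K)⁻¹ *ᵥ D K))⁻¹ • (cmS13 (F K))ᵀ) :=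
    Finset.sum_congr rfl fun K _ => by rw [Matrix.mul_smul]
  have hBBinv : B * (∑ K ∈ univ.erase K₀,
      (D K ⬝ᵥ ((A K)⁻¹ *ᵥ D K))⁻¹ • (cmS13 (F K) * (cmS13 (F K))ᵀ)) = 1 := by
    rw [hBval, hBinvR]
    have l1 : (∑ K ∈ univ.erase K₀,
        (D K ⬝ᵥ ((A K)⁻¹ *ᵥ D K)) • (cmS13 (F K) * (cmS13 (F K))ᵀ))
        = ∑ K ∈ univ.erase K₀,
          ((D K ⬝ᵥ ((A K)⁻¹ *ᵥ D K)) • cmS13 (F K)) * (cmS13 (F K))ᵀ :=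
      Finset.sum_congr rfl fun K _ => by rw [Matrix.smul_mul]
    rw [l1, mixS13 (s := fun _ => 1) (fun K => cmS13 (F K)) _ _ gorth gdisj
      (fun K => (D K ⬝ᵥ ((A K)⁻¹ *ᵥ D K)) • cmS13 (F K))
      (fun K => (D K ⬝ᵥ ((A K)⁻¹ *ᵥ D K))⁻¹ • (cmS13 (F K))ᵀ),
      Finset.inter_self, ← hGcomp]
    refine Finset.sum_congr rfl fun K hK => ?_
    rw [Matrix.smul_mul, Matrix.mul_smul, smul_smul,
      mul_inv_cancel₀ (hBK K (Finset.ne_of_mem_erase hK)), one_smul]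
  have hUnitB : IsUnit B :=
    (Matrix.isUnit_iff_isUnit_det B).mpr (Matrix.isUnit_det_of_right_inverse hBBinv)
  have hBinv : B⁻¹ = ∑ K ∈ univ.erase K₀,
      (D K ⬝ᵥ ((A K)⁻¹ *ᵥ D K))⁻¹ • (cmS13 (F K) * (cmS13 (F K))ᵀ) :=
    Matrix.inv_eq_right_inv hBBinv
  refine ⟨hUnitB, ?_, ?_⟩
  · rw [hBinv]; exact Finset.sum_congr rfl fun K _ => by rw [vmv_eqS13]
  -- the stencil identity
  have hT1 : Ahat⁻¹ * Dhatᵀ = ∑ K ∈ univ.erase K₀,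
      (Hh K * (A K)⁻¹) * (cmS13 (D K) * (cmS13 (F K))ᵀ) := by
    rw [hAinvL, hDT, mixS13 Hh _ _ (horth' _ _) (hdisj' _ _)
      (fun K => Hh K * (A K)⁻¹) (fun K => cmS13 (D K) * (cmS13 (F K))ᵀ),
      Finset.univ_inter]
  have hT2 : Ahat⁻¹ * Dhatᵀ * B⁻¹ = ∑ K ∈ univ.erase K₀,
      (Hh K * (A K)⁻¹ * cmS13 (D K)) * ((D K ⬝ᵥ ((A K)⁻¹ *ᵥ D K))⁻¹ • (cmS13 (F K))ᵀ) := by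
    rw [hT1, hBinv, hBinvR]
    have l1 : (∑ K ∈ univ.erase K₀, (Hh K * (A K)⁻¹) * (cmS13 (D K) * (cmS13 (F K))ᵀ))
        = ∑ K ∈ univ.erase K₀, (Hh K * (A K)⁻¹ * cmS13 (D K)) * (cmS13 (F K))ᵀ :=
      Finset.sum_congr rfl fun K _ => by simp only [Matrix.mul_assoc]
    rw [l1, mixS13 (s := fun _ => 1) (fun K => cmS13 (F K)) _ _ gorth gdisj
      (fun K => Hh K * (A K)⁻¹ * cmS13 (D K))
      (fun K => (D K ⬝ᵥ ((A K)⁻¹ *ᵥ D K))⁻¹ • (cmS13 (F K))ᵀ),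
      Finset.inter_self]
  have hT3 : Ahat⁻¹ * Dhatᵀ * B⁻¹ * Dhat = ∑ K ∈ univ.erase K₀,
      ((D K ⬝ᵥ ((A K)⁻¹ *ᵥ D K))⁻¹ • (Hh K * (A K)⁻¹ * cmS13 (D K)))
        * ((cmS13 (D K))ᵀ * (Hh K)ᵀ) := by
    rw [hT2, hD2]
    have l1 : (∑ K ∈ univ.erase K₀,
        (Hh K * (A K)⁻¹ * cmS13 (D K)) * ((D K ⬝ᵥ ((A K)⁻¹ *ᵥ D K))⁻¹ • (cmS13 (F K))ᵀ))
        = ∑ K ∈ univ.erase K₀,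
          ((D K ⬝ᵥ ((A K)⁻¹ *ᵥ D K))⁻¹ • (Hh K * (A K)⁻¹ * cmS13 (D K))) * (cmS13 (F K))ᵀ :=
      Finset.sum_congr rfl fun K _ => by simp only [Matrix.mul_smul, Matrix.smul_mul, Matrix.mul_assoc]
    rw [l1, mixS13 (s := fun _ => 1) (fun K => cmS13 (F K)) _ _ gorth gdisj
      (fun K => (D K ⬝ᵥ ((A K)⁻¹ *ᵥ D K))⁻¹ • (Hh K * (A K)⁻¹ * cmS13 (D K)))
      (fun K => (cmS13 (D K))ᵀ * (Hh K)ᵀ), Finset.inter_self]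
  have hX : Ahat⁻¹ * Dhatᵀ * B⁻¹ * Dhat * Ahat⁻¹ = ∑ K ∈ univ.erase K₀,
      Hh K * (((D K ⬝ᵥ ((A K)⁻¹ *ᵥ D K))⁻¹ •
        ((A K)⁻¹ * vecMulVec (D K) (D K) * (A K)⁻¹)) * (Hh K)ᵀ) := by
    rw [hT3, hAinv]
    have l1 : (∑ K ∈ univ.erase K₀,
        ((D K ⬝ᵥ ((A K)⁻¹ *ᵥ D K))⁻¹ • (Hh K * (A K)⁻¹ * cmS13 (D K)))
          * ((cmS13 (D K))ᵀ * (Hh K)ᵀ))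
        = ∑ K ∈ univ.erase K₀,
          (((D K ⬝ᵥ ((A K)⁻¹ *ᵥ D K))⁻¹ • (Hh K * (A K)⁻¹ * cmS13 (D K)))
            * (cmS13 (D K))ᵀ) * (Hh K)ᵀ :=
      Finset.sum_congr rfl fun K _ => by simp only [Matrix.mul_assoc]
    rw [l1, mixS13 Hh _ _ (horth' _ _) (hdisj' _ _)
      (fun K => ((D K ⬝ᵥ ((A K)⁻¹ *ᵥ D K))⁻¹ • (Hh K * (A K)⁻¹ * cmS13 (D K)))
        * (cmS13 (D K))ᵀ)
      (fun K => (A K)⁻¹ * (Hh K)ᵀ), Finset.inter_univ]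
    refine Finset.sum_congr rfl fun K _ => ?_
    rw [vmv_eqS13]
    simp only [Matrix.smul_mul, Matrix.mul_smul, Matrix.mul_assoc]
  have hCA : Chat * Ahat⁻¹ * Chatᵀ
      = ∑ K, (H K * C K * (A K)⁻¹) * ((C K)ᵀ * (H K)ᵀ) := by
    rw [hCT, hChat, hAinv, mixS13 Hh _ _ (horth' _ _) (hdisj' _ _)
      (fun K => H K * C K) (fun K => (A K)⁻¹ * (Hh K)ᵀ), Finset.univ_inter]
    have l1 : (∑ K, (H K * C K) * ((A K)⁻¹ * (Hh K)ᵀ))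
        = ∑ K, (H K * C K * (A K)⁻¹) * (Hh K)ᵀ :=
      Finset.sum_congr rfl fun K _ => by simp only [Matrix.mul_assoc]
    rw [l1, mixS13 Hh _ _ (horth' _ _) (hdisj' _ _)
      (fun K => H K * C K * (A K)⁻¹) (fun K => (C K)ᵀ * (H K)ᵀ), Finset.univ_inter]
  have hCX : Chat * (Ahat⁻¹ * Dhatᵀ * B⁻¹ * Dhat * Ahat⁻¹) * Chatᵀ
      = ∑ K ∈ univ.erase K₀,
        ((D K ⬝ᵥ ((A K)⁻¹ *ᵥ D K))⁻¹ •
          (H K * C K * ((A K)⁻¹ * vecMulVec (D K) (D K) * (A K)⁻¹)))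
          * ((C K)ᵀ * (H K)ᵀ) := by
    rw [hX, hCT, hChat, mixS13 Hh _ _ (horth' _ _) (hdisj' _ _)
      (fun K => H K * C K)
      (fun K => ((D K ⬝ᵥ ((A K)⁻¹ *ᵥ D K))⁻¹ •
        ((A K)⁻¹ * vecMulVec (D K) (D K) * (A K)⁻¹)) * (Hh K)ᵀ), Finset.univ_inter]
    have l1 : (∑ K ∈ univ.erase K₀, (H K * C K) *
        (((D K ⬝ᵥ ((A K)⁻¹ *ᵥ D K))⁻¹ •
          ((A K)⁻¹ * vecMulVec (D K) (D K) * (A K)⁻¹)) * (Hh K)ᵀ))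
        = ∑ K ∈ univ.erase K₀,
          ((D K ⬝ᵥ ((A K)⁻¹ *ᵥ D K))⁻¹ •
            (H K * C K * ((A K)⁻¹ * vecMulVec (D K) (D K) * (A K)⁻¹))) * (Hh K)ᵀ :=
      Finset.sum_congr rfl fun K _ => by
        simp only [Matrix.mul_smul, Matrix.smul_mul, Matrix.mul_assoc]
    rw [l1, mixS13 Hh _ _ (horth' _ _) (hdisj' _ _)
      (fun K => (D K ⬝ᵥ ((A K)⁻¹ *ᵥ D K))⁻¹ •
        (H K * C K * ((A K)⁻¹ * vecMulVec (D K) (D K) * (A K)⁻¹)))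
      (fun K => (C K)ᵀ * (H K)ᵀ), Finset.inter_univ]
  rw [Matrix.mul_sub, Matrix.sub_mul, hCA, hCX,
    ← Finset.sum_erase_add univ _ (Finset.mem_univ K₀), add_sub_right_comm,
    ← Finset.sum_sub_distrib]
  congr 1
  · refine Finset.sum_congr rfl fun K _ => ?_
    simp only [Matrix.mul_sub, Matrix.sub_mul, Matrix.mul_smul, Matrix.smul_mul,
      Matrix.mul_assoc]
  · simp only [Matrix.mul_assoc]
end

section
/- Let Â be an n̂ × n̂ real symmetric positive definite matrix, D̂ an m × n̂ real matrix such that B := D̂ Â⁻¹ D̂ᵀ is invertible, and Ĉ a p × n̂ real matrix. Then G := Ĉ (Â⁻¹ − Â⁻¹ D̂ᵀ B⁻¹ D̂ Â⁻¹) Ĉᵀ is symmetric positive semidefinite. If moreover the homogeneous block system has trivial kernel (i.e., Â Û + D̂ᵀ P + Ĉᵀ Ŵ = 0, D̂ Û = 0 and Ĉ Û = 0 imply Ŵ = 0), then G is symmetric positive definite. -/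
open Matrix

/-- if `Â` is symmetric positive definite and `B = D̂Â⁻¹D̂ᵀ` is
invertible, then the reduced matrix `G = Ĉ(Â⁻¹ - Â⁻¹D̂ᵀB⁻¹D̂Â⁻¹)Ĉᵀ` is
symmetric positive semidefinite; if moreover the homogeneous block system has
trivial kernel in `Ŵ`, then `G` is symmetric positive definite. -/
theorem stmt_14 (nh m p : ℕ)
    (A : Matrix (Fin nh) (Fin nh) ℝ) (hA : A.PosDef)
    (D : Matrix (Fin m) (Fin nh) ℝ) (C : Matrix (Fin p) (Fin nh) ℝ)
    (hB : IsUnit (D * A⁻¹ * Dᵀ)) :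
    (C * (A⁻¹ - A⁻¹ * Dᵀ * (D * A⁻¹ * Dᵀ)⁻¹ * D * A⁻¹) * Cᵀ).PosSemidef ∧
      ((∀ (U : Fin nh → ℝ) (P : Fin m → ℝ) (W : Fin p → ℝ),
          A *ᵥ U + Dᵀ *ᵥ P + Cᵀ *ᵥ W = 0 → D *ᵥ U = 0 → C *ᵥ U = 0 → W = 0) →
        (C * (A⁻¹ - A⁻¹ * Dᵀ * (D * A⁻¹ * Dᵀ)⁻¹ * D * A⁻¹) * Cᵀ).PosDef) := by
  have hAdet : IsUnit A.det := isUnit_iff_ne_zero.mpr hA.det_pos.ne'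
  have hAinv : (A⁻¹).PosDef := hA.inv
  set B : Matrix (Fin m) (Fin m) ℝ := D * A⁻¹ * Dᵀ with hBdef
  have hBdet : IsUnit B.det := (Matrix.isUnit_iff_isUnit_det B).mp hB
  have hBBi : B⁻¹ * B = 1 := Matrix.nonsing_inv_mul B hBdet
  have hBiB : B * B⁻¹ = 1 := Matrix.mul_nonsing_inv B hBdet
  -- symmetry facts
  have hAsymm : Aᵀ = A := by
    have := hA.isHermitian.eq
    rwa [← Matrix.conjTranspose_eq_transpose_of_trivial]
  have hAisym : (A⁻¹)ᵀ = A⁻¹ := by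
    rw [Matrix.transpose_nonsing_inv, hAsymm]
  have hBsym : Bᵀ = B := by
    rw [hBdef, Matrix.transpose_mul, Matrix.transpose_mul, Matrix.transpose_transpose,
      hAisym, Matrix.mul_assoc]
  have hBisym : (B⁻¹)ᵀ = B⁻¹ := by
    rw [Matrix.transpose_nonsing_inv, hBsym]
  set Q : Matrix (Fin nh) (Fin nh) ℝ := A⁻¹ * Dᵀ * B⁻¹ * D with hQdef
  have hQQ : Q * Q = Q := by
    have h1 : B⁻¹ * (D * (A⁻¹ * (Dᵀ * (B⁻¹ * D)))) = B⁻¹ * D := by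
      rw [show D * (A⁻¹ * (Dᵀ * (B⁻¹ * D))) = D * A⁻¹ * Dᵀ * (B⁻¹ * D) by
        simp only [Matrix.mul_assoc], ← hBdef, ← Matrix.mul_assoc, hBBi, Matrix.one_mul]
    rw [hQdef]
    simp only [Matrix.mul_assoc]
    rw [h1]
  have hQT : Qᵀ = Dᵀ * B⁻¹ * D * A⁻¹ := by
    rw [hQdef]
    simp only [Matrix.transpose_mul, Matrix.transpose_transpose, hAisym, hBisym,
      Matrix.mul_assoc]
  have hQA : A⁻¹ * Qᵀ = Q * A⁻¹ := by
    rw [hQT, hQdef]; simp only [Matrix.mul_assoc]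
  -- the key factorization
  set N : Matrix (Fin p) (Fin nh) ℝ := C * (1 - Q) with hNdef
  have hM : A⁻¹ - A⁻¹ * Dᵀ * (D * A⁻¹ * Dᵀ)⁻¹ * D * A⁻¹ = (1 - Q) * A⁻¹ * (1 - Q)ᵀ := by
    have : (1 - Q) * A⁻¹ * (1 - Q)ᵀ = A⁻¹ - Q * A⁻¹ - (A⁻¹ * Qᵀ - Q * (A⁻¹ * Qᵀ)) := by
      rw [Matrix.transpose_sub, Matrix.transpose_one]
      noncomm_ring
    rw [this, hQA, ← Matrix.mul_assoc, hQQ]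
    rw [hQdef, ← hBdef]
    abel
  have hGfact : C * (A⁻¹ - A⁻¹ * Dᵀ * (D * A⁻¹ * Dᵀ)⁻¹ * D * A⁻¹) * Cᵀ
      = N * A⁻¹ * Nᵀ := by
    rw [hM, hNdef]
    simp only [Matrix.transpose_mul, Matrix.mul_assoc]
  have hconj : Nᴴ = Nᵀ := Matrix.conjTranspose_eq_transpose_of_trivial N
  have hPSD : (C * (A⁻¹ - A⁻¹ * Dᵀ * (D * A⁻¹ * Dᵀ)⁻¹ * D * A⁻¹) * Cᵀ).PosSemidef := by
    rw [hGfact, ← hconj]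
    exact hAinv.posSemidef.mul_mul_conjTranspose_same N
  refine ⟨hPSD, fun hker => ?_⟩
  refine Matrix.PosDef.of_dotProduct_mulVec_pos hPSD.isHermitian (fun x hx => ?_)
  rcases lt_or_eq_of_le (hPSD.dotProduct_mulVec_nonneg x) with h | h
  · simpa using h
  · exfalso
    apply hx
    -- quadratic form vanishes, so Nᵀ *ᵥ x = 0
    have hq : star x ⬝ᵥ (N * A⁻¹ * Nᵀ) *ᵥ x = 0 := by rw [← hGfact, ← h]
    have key2 : star x ⬝ᵥ (N * A⁻¹ * Nᵀ) *ᵥ x = star (Nᵀ *ᵥ x) ⬝ᵥ A⁻¹ *ᵥ (Nᵀ *ᵥ x) := by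
      simp only [star_trivial, ← Matrix.mulVec_mulVec, Matrix.dotProduct_mulVec x N,
        Matrix.mulVec_transpose]
    have hy : Nᵀ *ᵥ x = 0 := by
      by_contra hy
      have := hAinv.dotProduct_mulVec_pos hy
      rw [← key2, hq] at this
      exact lt_irrefl 0 this
    -- now build the solution of the homogeneous system
    set Pv : Fin m → ℝ := -(B⁻¹ *ᵥ (D *ᵥ (A⁻¹ *ᵥ (Cᵀ *ᵥ x)))) with hPvdef
    set U : Fin nh → ℝ := -(A⁻¹ *ᵥ (Dᵀ *ᵥ Pv + Cᵀ *ᵥ x)) with hUdef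
    have hAAv : ∀ v : Fin nh → ℝ, A *ᵥ (A⁻¹ *ᵥ v) = v := by
      intro v; rw [Matrix.mulVec_mulVec, Matrix.mul_nonsing_inv A hAdet, Matrix.one_mulVec]
    have h1 : A *ᵥ U + Dᵀ *ᵥ Pv + Cᵀ *ᵥ x = 0 := by
      rw [hUdef, Matrix.mulVec_neg, hAAv]
      abel
    have hU : U = -(((A⁻¹ - A⁻¹ * Dᵀ * (D * A⁻¹ * Dᵀ)⁻¹ * D * A⁻¹) * Cᵀ) *ᵥ x) := by
      rw [hUdef, hPvdef, ← hBdef]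
      simp only [Matrix.mulVec_neg, Matrix.mulVec_add, Matrix.mulVec_mulVec,
        Matrix.sub_mul, Matrix.sub_mulVec, Matrix.mul_assoc, neg_neg, neg_sub, neg_add]
      abel
    have hDM : D * ((A⁻¹ - A⁻¹ * Dᵀ * (D * A⁻¹ * Dᵀ)⁻¹ * D * A⁻¹) * Cᵀ) = 0 := by
      rw [← Matrix.mul_assoc, ← hBdef, Matrix.mul_sub]
      rw [show D * (A⁻¹ * Dᵀ * B⁻¹ * D * A⁻¹) = D * A⁻¹ * Dᵀ * (B⁻¹ * (D * A⁻¹)) by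
        simp only [Matrix.mul_assoc], ← hBdef, ← Matrix.mul_assoc, hBiB, Matrix.one_mul]
      rw [sub_self, Matrix.zero_mul]
    have h2 : D *ᵥ U = 0 := by
      rw [hU, Matrix.mulVec_neg, Matrix.mulVec_mulVec, hDM]
      simp
    have h3 : C *ᵥ U = 0 := by
      rw [hU, Matrix.mulVec_neg, Matrix.mulVec_mulVec, ← Matrix.mul_assoc, hGfact,
        ← Matrix.mulVec_mulVec, ← Matrix.mulVec_mulVec, hy]
      simp
    exact hker U Pv x h1 h2 h3
end
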